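/- For every m ≥ 2, every occurrence of the word δ_{m−1} E_{1,m−1} δ_{m−1} (of length 2^{m−1} + 1) in the period-doubling sequence D is immediately preceded and immediately followed by E_{1,m−1}: if δ_{m−1} E_{1,m−1} δ_{m−1} occurs in D at position i, then i > 2^{m−1} − 1, D[i − (2^{m−1} − 1) .. i − 1] = E_{1,m−1}, and D[i + 2^{m−1} + 1 .. i + 2^m − 1] = E_{1,m−1}. -/

import Mathlib

/-- The alphabet: letters a, b (for the period-doubling sequence) and c (used by Θ₂). -/
inductive Letter : Type
  | a | b | c
deriving DecidableEq, Repr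

open Letter

/-- The period-doubling substitution σ : a ↦ ab, b ↦ aa, extended to words
(the extra letter c is left untouched; it is never produced). -/
def sigmaw : List Letter → List Letter :=
  fun w => w.flatMap fun x => match x with
    | .a => [.a, .b]
    | .b => [.a, .a]
    | .c => [.c]

/-- A_m = σ^m(a). -/
def A (m : ℕ) : List Letter := sigmaw^[m] [.a]

/-- B_m = σ^m(b). -/
def B (m : ℕ) : List Letter := sigmaw^[m] [.b]

/-- δ_m, the last letter of A_m. -/
def delta (m : ℕ) : Letter := (A m).getLastD .a

/-- The period-doubling sequence D, as a function giving its (n+1)-st letter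
(0-indexed); it is the fixed point of σ beginning with a, and A_{n+1} is a
prefix of it of length 2^{n+1} > n. -/
def D (n : ℕ) : Letter := (A (n + 1)).getD n .a

/-- The finite segment D[i .. i+len−1] of the period-doubling sequence,
with 1-based starting position i. -/
def Dseg (i len : ℕ) : List Letter := (List.range len).map fun k => D (i - 1 + k)

/-- u occurs in the finite word w at (1-based) position i. -/
def OccursAt {α : Type*} (u w : List α) (i : ℕ) : Prop :=
  1 ≤ i ∧ i - 1 + u.length ≤ w.length ∧ (w.drop (i - 1)).take u.length = u

/-- u is a factor of the finite word w. -/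
def IsFactor {α : Type*} (u w : List α) : Prop := ∃ i, OccursAt u w i

/-- u occurs in the period-doubling sequence D at (1-based) position i. -/
def DOccursAt (u : List Letter) (i : ℕ) : Prop := 1 ≤ i ∧ Dseg i u.length = u

/-- u is a factor of the period-doubling sequence D. -/
def FactorD (u : List Letter) : Prop := ∃ i, DOccursAt u i

/-- L(u,p): the starting position of the p-th occurrence (p ≥ 1) of u in D. -/
noncomputable def L (u : List Letter) (p : ℕ) : ℕ := Nat.nth (DOccursAt u) (p - 1)

/-- r_p(u): the p-th return word of u (p ≥ 1), i.e. D[L(u,p) .. L(u,p+1)−1];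
r_0(u) is the prefix of D preceding the first occurrence of u. -/
noncomputable def r (u : List Letter) (p : ℕ) : List Letter :=
  if p = 0 then Dseg 1 (L u 1 - 1) else Dseg (L u p) (L u (p + 1) - L u p)

/-- The morphism τ₁ : a ↦ a, b ↦ bb, extended to words. -/
def tau1 : List Letter → List Letter :=
  fun w => w.flatMap fun x => match x with
    | .a => [.a]
    | .b => [.b, .b]
    | .c => [.c]

/-- The morphism τ₂ : a ↦ ab, b ↦ acac, extended to words. -/
def tau2 : List Letter → List Letter :=
  fun w => w.flatMap fun x => match x with
    | .a => [.a, .b]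
    | .b => [.a, .c, .a, .c]
    | .c => [.c]

/-- Θ₁[p], the p-th letter (p ≥ 1) of Θ₁ = τ₁(D): since |τ₁(w)| ≥ |w|, the p-th
letter of Θ₁ is the p-th letter of the image of the length-p prefix of D. -/
def Theta1 (p : ℕ) : Letter := (tau1 (Dseg 1 p)).getD (p - 1) .a

/-- Θ₂[p], the p-th letter (p ≥ 1) of Θ₂ = τ₂(D). -/
def Theta2 (p : ℕ) : Letter := (tau2 (Dseg 1 p)).getD (p - 1) .a

/-- The envelope word E_{1,m} = A_m with its last letter δ_m deleted. -/
def E1 (m : ℕ) : List Letter := (A m).dropLast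

/-- The envelope word E_{2,m} = B_m B_{m−1} with its last letter δ_m deleted. -/
def E2 (m : ℕ) : List Letter := (B m ++ B (m - 1)).dropLast

/-- Enumeration of the envelope words in the order
E_{1,1} ⊏ E_{2,1} ⊏ E_{1,2} ⊏ E_{2,2} ⊏ …. -/
def Eword (k : ℕ) : List Letter := if k % 2 = 0 then E1 (k / 2 + 1) else E2 (k / 2 + 1)

/-- Env(u): the ⊏-least envelope word having u as a factor. -/
noncomputable def Env (u : List Letter) : List Letter :=
  Eword (sInf {k | IsFactor u (Eword k)})

/-- The letterwise complement exchanging a and b. -/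
def comp : Letter → Letter
  | .a => .b
  | .b => .a
  | .c => .c

/-!
The letter of D at (1-based) position n is a or b according as the 2-adic valuation v(n) is even
or odd (`pdLetter n`). By the ultrametric property, v(c + t) = v(t) whenever 2^e ∣ c and
0 < t < 2^e, so D[c+1 .. c+2^e−1] is E_{1,e} for every multiple c of 2^e. Conversely, an
occurrence of δ_e E_{1,e} δ_e at position i forces D[i+t] = D[t] for 0 < t ≤ 2^e; if
w = v(i) < e, then t = 2^(w+1) gives v(i + t) = w and v(t) = w + 1, of different parities. Hence
2^e ∣ i, and both neighbours of the occurrence are E_{1,e}.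
-/

theorem padicValNat.add_eq_of_lt {p a b : ℕ} [Fact p.Prime] (ha : a ≠ 0) (hb : b ≠ 0)
    (h : padicValNat p a < padicValNat p b) : padicValNat p (a + b) = padicValNat p a := by
  have hq := padicValRat.add_eq_of_lt (p := p) (q := a) (r := b) (by positivity)
    (by exact_mod_cast ha) (by exact_mod_cast hb) (by simpa [padicValRat.of_nat] using h)
  rw [← Nat.cast_add, padicValRat.of_nat, padicValRat.of_nat] at hq
  exact_mod_cast hq

def pdLetter (n : ℕ) : Letter := if Even (padicValNat 2 n) then .a else .b

theorem pdLetter_eq_iff {m n : ℕ} :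
    pdLetter m = pdLetter n ↔ (Even (padicValNat 2 m) ↔ Even (padicValNat 2 n)) := by
  unfold pdLetter
  by_cases hm : Even (padicValNat 2 m) <;> by_cases hn : Even (padicValNat 2 n) <;> simp [hm, hn]

theorem pdLetter_two_mul_add_one (k : ℕ) : pdLetter (2 * k + 1) = .a := by
  simp [pdLetter, padicValNat.eq_zero_of_not_dvd (by omega : ¬ 2 ∣ 2 * k + 1)]

theorem pdLetter_two_mul {k : ℕ} (hk : k ≠ 0) : pdLetter (2 * k) = comp (pdLetter k) := by
  rw [pdLetter, pdLetter, padicValNat.mul two_ne_zero hk, padicValNat_self]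
  by_cases h : Even (padicValNat 2 k) <;> simp [h, comp, Nat.even_add_one, add_comm 1]

theorem sigmaw_singleton_pdLetter (n : ℕ) : sigmaw [pdLetter n] = [.a, comp (pdLetter n)] := by
  unfold pdLetter
  split_ifs <;> rfl

theorem sigmaw_map_pdLetter (n : ℕ) :
    sigmaw ((List.range' 1 n).map pdLetter) = (List.range' 1 (2 * n)).map pdLetter := by
  induction n with
  | zero => rfl
  | succ n ih =>
    have hrange :
        List.range' 1 (2 * (n + 1)) = List.range' 1 (2 * n) ++ [2 * n + 1, 2 * (n + 1)] := by
      rw [mul_add_one, ← List.range'_append (m := 2 * n) (n := 2)]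
      simp [List.range'_succ]
      omega
    rw [List.range'_1_concat, List.map_append, sigmaw, List.flatMap_append, ← sigmaw, ← sigmaw,
      ih, hrange, List.map_append, List.map_singleton, add_comm 1, sigmaw_singleton_pdLetter]
    simp [pdLetter_two_mul_add_one, pdLetter_two_mul (Nat.succ_ne_zero n)]

theorem A_eq_map_pdLetter (m : ℕ) : A m = (List.range' 1 (2 ^ m)).map pdLetter := by
  induction m with
  | zero => simp [A, pdLetter]
  | succ m ih => rw [A, Function.iterate_succ_apply', ← A, ih, sigmaw_map_pdLetter, pow_succ']

theorem D_eq_pdLetter (n : ℕ) : D n = pdLetter (n + 1) := by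
  have hn : n < 2 ^ (n + 1) := n.lt_two_pow_self.trans (Nat.pow_lt_pow_succ one_lt_two)
  simp [D, A_eq_map_pdLetter, hn, add_comm 1]

theorem Dseg_eq_map_pdLetter {i : ℕ} (hi : 1 ≤ i) (len : ℕ) :
    Dseg i len = (List.range' i len).map pdLetter := by
  simp only [Dseg, D_eq_pdLetter, List.range'_eq_map_range, List.map_map]
  exact List.map_congr_left fun k _ => congrArg pdLetter (by simp only; omega)

theorem A_eq_concat (m : ℕ) :
    A m = (List.range' 1 (2 ^ m - 1)).map pdLetter ++ [pdLetter (2 ^ m)] := by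
  obtain ⟨k, hk⟩ : ∃ k, 2 ^ m = k + 1 :=
    ⟨2 ^ m - 1, (Nat.sub_add_cancel Nat.one_le_two_pow).symm⟩
  rw [A_eq_map_pdLetter, hk, List.range'_1_concat, List.map_append, Nat.add_sub_cancel,
    add_comm 1]
  rfl

theorem E1_eq_map_pdLetter (m : ℕ) : E1 m = (List.range' 1 (2 ^ m - 1)).map pdLetter := by
  rw [E1, A_eq_concat, List.dropLast_concat]

theorem delta_eq_pdLetter (m : ℕ) : delta m = pdLetter (2 ^ m) := by
  rw [delta, A_eq_concat, List.getLastD_concat]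

theorem pdLetter_add_of_dvd {e c t : ℕ} (hc : 2 ^ e ∣ c) (ht : 0 < t) (hte : t < 2 ^ e) :
    pdLetter (c + t) = pdLetter t := by
  rcases eq_or_ne c 0 with rfl | hc0
  · rw [zero_add]
  have hlt : padicValNat 2 t < padicValNat 2 c :=
    ((padicValNat_le_nat_log t).trans_lt (Nat.log_lt_of_lt_pow ht.ne' hte)).trans_le
      ((padicValNat_dvd_iff_le hc0).1 hc)
  rw [add_comm, pdLetter, pdLetter, padicValNat.add_eq_of_lt ht.ne' hc0 hlt]

theorem pow_dvd_of_pdLetter_add {e i : ℕ}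
    (h : ∀ t, 0 < t → t ≤ 2 ^ e → pdLetter (i + t) = pdLetter t) : 2 ^ e ∣ i := by
  rcases eq_or_ne i 0 with rfl | hi0
  · exact dvd_zero _
  by_contra hdvd
  set w := padicValNat 2 i
  have hw : w < e := by
    by_contra! hew
    exact hdvd ((padicValNat_dvd_iff_le hi0).2 hew)
  have hval : padicValNat 2 (i + 2 ^ (w + 1)) = w :=
    padicValNat.add_eq_of_lt hi0 (by positivity) (by rw [padicValNat.prime_pow]; omega)
  have := pdLetter_eq_iff.1 (h (2 ^ (w + 1)) (by positivity) (Nat.pow_le_pow_right two_pos hw))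
  rw [hval, padicValNat.prime_pow, Nat.even_add_one] at this
  tauto

theorem Dseg_add_one_of_dvd {e c : ℕ} (hc : 2 ^ e ∣ c) : Dseg (c + 1) (2 ^ e - 1) = E1 e := by
  rw [Dseg_eq_map_pdLetter (Nat.le_add_left 1 c), E1_eq_map_pdLetter]
  refine List.ext_getElem (by simp) fun k hk _ => ?_
  simp only [List.getElem_map, List.getElem_range', List.length_map, List.length_range'] at hk ⊢
  rw [add_assoc]
  exact pdLetter_add_of_dvd hc (by omega) (by omega)

theorem pdLetter_add_of_DOccursAt {e i : ℕ} (h : DOccursAt (delta e :: (E1 e ++ [delta e])) i) :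
    ∀ t, 0 < t → t ≤ 2 ^ e → pdLetter (i + t) = pdLetter t := by
  obtain ⟨hi, hseg⟩ := h
  rw [E1_eq_map_pdLetter, delta_eq_pdLetter, ← A_eq_concat, A_eq_map_pdLetter,
    Dseg_eq_map_pdLetter hi, List.length_cons, List.length_map, List.length_range',
    List.range'_succ, List.map_cons, List.cons.injEq] at hseg
  intro t ht hte
  have := congrArg (·[t - 1]?) hseg.2
  simp only [List.getElem?_map, List.getElem?_range', show t - 1 < 2 ^ e by omega] at this
  simpa [show i + 1 + (t - 1) = i + t by omega, show 1 + (t - 1) = t by omega] using this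

theorem middle_word_surrounded_general (m : ℕ) (i : ℕ)
    (hocc : DOccursAt (delta (m - 1) :: (E1 (m - 1) ++ [delta (m - 1)])) i) :
    2 ^ (m - 1) - 1 < i ∧
    Dseg (i - (2 ^ (m - 1) - 1)) (2 ^ (m - 1) - 1) = E1 (m - 1) ∧
    Dseg (i + 2 ^ (m - 1) + 1) (2 ^ (m - 1) - 1) = E1 (m - 1) := by
  obtain ⟨s, rfl⟩ := pow_dvd_of_pdLetter_add (pdLetter_add_of_DOccursAt hocc)
  obtain ⟨s, rfl⟩ : ∃ s', s = s' + 1 :=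
    Nat.exists_eq_succ_of_ne_zero (by rintro rfl; simp [DOccursAt] at hocc)
  have hpos : 0 < 2 ^ (m - 1) := by positivity
  refine ⟨by rw [mul_add_one]; omega, ?_, ?_⟩
  · rw [show 2 ^ (m - 1) * (s + 1) - (2 ^ (m - 1) - 1) = 2 ^ (m - 1) * s + 1 by
      rw [mul_add_one]; omega]
    exact Dseg_add_one_of_dvd (dvd_mul_right _ _)
  · rw [show 2 ^ (m - 1) * (s + 1) + 2 ^ (m - 1) + 1 = 2 ^ (m - 1) * (s + 2) + 1 by ring]
    exact Dseg_add_one_of_dvd (dvd_mul_right _ _)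

/-- For every m ≥ 2, every occurrence of δ_{m−1} E_{1,m−1} δ_{m−1} in D
at position i is immediately preceded and followed by E_{1,m−1}: i > 2^{m−1} − 1,
D[i − (2^{m−1} − 1) .. i − 1] = E_{1,m−1}, and D[i + 2^{m−1} + 1 .. i + 2^m − 1]
= E_{1,m−1}. -/
theorem middle_word_surrounded (m : ℕ) (hm : 2 ≤ m) (i : ℕ)
    (hocc : DOccursAt (delta (m - 1) :: (E1 (m - 1) ++ [delta (m - 1)])) i) :
    2 ^ (m - 1) - 1 < i ∧
    Dseg (i - (2 ^ (m - 1) - 1)) (2 ^ (m - 1) - 1) = E1 (m - 1) ∧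
    Dseg (i + 2 ^ (m - 1) + 1) (2 ^ (m - 1) - 1) = E1 (m - 1) :=
  middle_word_surrounded_general m i hocc
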